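/- Let G be the complete graph K₃ on three vertices, and consider the single-cop concurrent cops and robber game on G. Let π* denote the memoryless randomized strategy under which, from any position (x,y) with x ≠ y, a player at vertex z moves with probability 1/2 to each of the two vertices different from z. Then: (a) if both players use π*, the expected capture time from every initial position (x,y) with x ≠ y equals 2; and (b) these strategies are optimal, i.e., the value of the game satisfies v̂_{(x,y)} = 2 for every (x,y) with x ≠ y (and v̂_{(x,x)} = 0 for every x). -/

import Mathlib

open Finset Filter

noncomputable section

variable {V : Type*} [Fintype V] [DecidableEq V]

/-- The closed neighborhood `N[u]` of a vertex `u`: `u` together with its neighbors. -/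
def nbhd (G : SimpleGraph V) [DecidableRel G.Adj] (u : V) : Finset V :=
  insert u (G.neighborFinset u)

lemma nbhd_nonempty (G : SimpleGraph V) [DecidableRel G.Adj] (u : V) :
    (nbhd G u).Nonempty :=
  ⟨u, Finset.mem_insert_self u _⟩

/-! ### The single-cop concurrent game, with the expected-capture-time payoff -/

/-- A randomized strategy in the single-cop concurrent game: to each finite history of
positions (cop location, robber location) it assigns a distribution over next moves. -/
abbrev Strat (V : Type*) := List (V × V) → PMF V

/-- A strategy is memoryless if the distribution it assigns depends only on the
current (most recent) position. -/
def Memoryless (π : Strat V) : Prop :=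
  ∀ h₁ h₂ : List (V × V), h₁.getLast? = h₂.getLast? → π h₁ = π h₂

/-- The single-cop CCCR transition function: simultaneous moves within closed
neighborhoods (illegal moves ignored), capture positions are absorbing, and a swap of
adjacent vertices is an \"en passant\" capture. -/
def step1 (G : SimpleGraph V) [DecidableRel G.Adj] (p : V × V) (u w : V) : V × V :=
  if p.1 = p.2 then p
  else
    let u' := if u ∈ nbhd G p.1 then u else p.1
    let w' := if w ∈ nbhd G p.2 then w else p.2
    if u' = p.2 ∧ w' = p.1 then (u', u') else (u', w')

/-- The distribution over histories of the first `t+1` positions, induced by the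
strategies `πC, πR` and the initial position `init`. -/
def play1 (G : SimpleGraph V) [DecidableRel G.Adj]
    (πC πR : Strat V) (init : V × V) : ℕ → PMF (List (V × V))
  | 0 => PMF.pure [init]
  | (t+1) => (play1 G πC πR init t).bind fun h =>
      (πC h).bind fun u => (πR h).bind fun w =>
        PMF.pure (h ++ [step1 G (h.getLast?.getD init) u w])

/-- The probability that cop and robber occupy different vertices at time `t`
(capture is absorbing, so this is the probability that the robber is still free). -/
def freeProb1 (G : SimpleGraph V) [DecidableRel G.Adj]
    (πC πR : Strat V) (init : V × V) (t : ℕ) : ENNReal :=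
  (play1 G πC πR init t).toOuterMeasure
    {h | (h.getLast?.getD init).1 ≠ (h.getLast?.getD init).2}

/-- The payoff: the expected number of rounds `t ≥ 0` at which cop and robber occupy
different vertices, i.e. the expected capture time. -/
def payoff (G : SimpleGraph V) [DecidableRel G.Adj]
    (πC πR : Strat V) (init : V × V) : ENNReal :=
  ∑' t : ℕ, freeProb1 G πC πR init t

/-- The (upper) value of the game started at `init`; the cop minimizes and the robber
maximizes the expected capture time. -/
def gameValue (G : SimpleGraph V) [DecidableRel G.Adj] (init : V × V) : ENNReal :=
  ⨅ πC : Strat V, ⨆ πR : Strat V, payoff G πC πR init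

/-- The complete graph `K₃` on three vertices. -/
def K3 : SimpleGraph (Fin 3) := ⊤

instance : DecidableRel K3.Adj := fun a b => inferInstanceAs (Decidable (a ≠ b))

/-- The uniform distribution on the two vertices of `K₃` different from `z`. -/
def unifNot (z : Fin 3) : PMF (Fin 3) :=
  PMF.uniformOfFinset ({z}ᶜ : Finset (Fin 3))
    (by rw [← Finset.card_pos, Finset.card_compl]; simp)

/-- The memoryless strategy `π*` for the cop: from a position `(x, y)` with `x ≠ y`,
move with probability `1/2` to each of the two vertices different from the cop's
current vertex `x` (after capture the move is irrelevant: the position is absorbing). -/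
def piStarC : Strat (Fin 3) := fun h =>
  match h.getLast? with
  | some p => if p.1 = p.2 then PMF.pure p.1 else unifNot p.1
  | none => PMF.pure 0

/-- The memoryless strategy `π*` for the robber: from a position `(x, y)` with
`x ≠ y`, move with probability `1/2` to each of the two vertices different from the
robber's current vertex `y`. -/
def piStarR : Strat (Fin 3) := fun h =>
  match h.getLast? with
  | some p => if p.1 = p.2 then PMF.pure p.2 else unifNot p.2
  | none => PMF.pure 0

/-!
On `K₃` every move is legal, so a round played from a free position `(x, y)` ends in capture
exactly when the cop lands on the robber's new vertex or the two tokens swap. A player who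
moves to one of the two vertices other than its own, uniformly, captures (or is captured) with
exactly one of its two moves, whatever the opponent does. Hence against `π*` the robber
survives every round with probability exactly `1/2`, whichever strategy the opponent uses: it is
free at time `t` with probability `2⁻ᵗ` and the expected capture time is `∑ 2⁻ᵗ = 2`. Both
players can thus guarantee `2`, and the two copies of `π*` form a saddle point.
-/

theorem iInf_iSup_eq_of_saddle {ι κ γ : Type*} [CompleteLattice γ] {f : ι → κ → γ} {i₀ : ι}
    {j₀ : κ} {c : γ} (hi : ∀ j, f i₀ j ≤ c) (hj : ∀ i, c ≤ f i j₀) : ⨅ i, ⨆ j, f i j = c :=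
  le_antisymm (iInf_le_of_le i₀ (iSup_le hi)) (le_iInf fun i => le_iSup_of_le j₀ (hj i))

theorem PMF.sum_coe {α : Type*} [Fintype α] (p : PMF α) : ∑ a, p a = 1 :=
  (tsum_fintype (L := SummationFilter.unconditional α) p).symm.trans p.tsum_coe

def escapeProb (G : SimpleGraph V) [DecidableRel G.Adj] (μ ν : PMF V) (p : V × V) : ENNReal :=
  ∑' u, μ u * ∑' w, ν w * if (step1 G p u w).1 = (step1 G p u w).2 then 0 else 1

def ConstantEscapeProb (G : SimpleGraph V) [DecidableRel G.Adj] (πC πR : Strat V) (r : ENNReal) :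
    Prop :=
  ∀ h p, h.getLast? = some p → p.1 ≠ p.2 → escapeProb G (πC h) (πR h) p = r

section General

variable (G : SimpleGraph V) [DecidableRel G.Adj]

lemma escapeProb_of_captured (μ ν : PMF V) {p : V × V} (hp : p.1 = p.2) :
    escapeProb G μ ν p = 0 := by
  simp [escapeProb, step1, hp]

lemma escapeProb_le_one (μ ν : PMF V) (p : V × V) : escapeProb G μ ν p ≤ 1 :=
  calc escapeProb G μ ν p ≤ ∑' u, μ u * ∑' w, ν w * 1 := by
        unfold escapeProb
        gcongr
        split_ifs <;> simp
    _ = 1 := by simp only [mul_one, PMF.tsum_coe]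

variable (πC πR : Strat V) (init : V × V)

lemma ne_nil_of_mem_support_play1 {t : ℕ} {h : List (V × V)}
    (hh : h ∈ (play1 G πC πR init t).support) : h ≠ [] := by
  cases t with
  | zero => simp_all [play1]
  | succ t =>
    simp only [play1, PMF.support_bind, PMF.support_pure, Set.mem_iUnion,
      Set.mem_singleton_iff] at hh
    obtain ⟨_, _, _, _, _, _, rfl⟩ := hh
    simp

lemma freeProb1_zero : freeProb1 G πC πR init 0 = if init.1 = init.2 then 0 else 1 := by
  by_cases h : init.1 = init.2 <;> simp [freeProb1, play1, PMF.toOuterMeasure_pure_apply, h]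

lemma freeProb1_succ (t : ℕ) :
    freeProb1 G πC πR init (t + 1) = ∑' h, play1 G πC πR init t h *
      escapeProb G (πC h) (πR h) (h.getLast?.getD init) := by
  simp only [freeProb1, play1, PMF.toOuterMeasure_bind_apply, PMF.toOuterMeasure_pure_apply,
    escapeProb, List.getLast?_concat, Option.getD_some, Set.mem_ofPred_eq, ite_not]

lemma freeProb1_succ_le (t : ℕ) : freeProb1 G πC πR init (t + 1) ≤ freeProb1 G πC πR init t := by
  rw [freeProb1_succ, freeProb1, PMF.toOuterMeasure_apply]
  refine ENNReal.tsum_le_tsum fun h => ?_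
  by_cases hfree : (h.getLast?.getD init).1 = (h.getLast?.getD init).2
  · simp [escapeProb_of_captured G _ _ hfree]
  · simpa [hfree] using mul_le_of_le_one_right' (escapeProb_le_one G (πC h) (πR h) _)

lemma freeProb1_diag (x : V) (t : ℕ) : freeProb1 G πC πR (x, x) t = 0 :=
  le_zero_iff.mp <| calc
    freeProb1 G πC πR (x, x) t ≤ freeProb1 G πC πR (x, x) 0 :=
      antitone_nat_of_succ_le (freeProb1_succ_le G πC πR (x, x)) (Nat.zero_le t)
    _ = 0 := by simp [freeProb1_zero]

lemma payoff_diag (x : V) : payoff G πC πR (x, x) = 0 := by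
  simp [payoff, freeProb1_diag]

variable {πC πR init} {r : ENNReal}

lemma freeProb1_succ_eq_mul (hr : ConstantEscapeProb G πC πR r) (t : ℕ) :
    freeProb1 G πC πR init (t + 1) = r * freeProb1 G πC πR init t := by
  rw [freeProb1_succ, freeProb1, PMF.toOuterMeasure_apply, ← ENNReal.tsum_mul_left]
  refine tsum_congr fun h => ?_
  by_cases hh : h ∈ (play1 G πC πR init t).support
  · obtain ⟨p, hp⟩ := Option.isSome_iff_exists.mp
      (List.getLast?_isSome.mpr (ne_nil_of_mem_support_play1 G πC πR init hh))
    by_cases hfree : p.1 = p.2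
    · simp [hp, hfree, escapeProb_of_captured]
    · simp [hp, hfree, hr h p hp hfree, mul_comm]
  · simp [(PMF.apply_eq_zero_iff _ _).mpr hh]

lemma freeProb1_eq_pow (hr : ConstantEscapeProb G πC πR r) (hinit : init.1 ≠ init.2) (t : ℕ) :
    freeProb1 G πC πR init t = r ^ t := by
  induction t with
  | zero => simp [freeProb1_zero, hinit]
  | succ t ih => rw [freeProb1_succ_eq_mul G hr, ih, pow_succ']

lemma payoff_eq_of_constantEscapeProb (hr : ConstantEscapeProb G πC πR r)
    (hinit : init.1 ≠ init.2) : payoff G πC πR init = (1 - r)⁻¹ := by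
  simp [payoff, freeProb1_eq_pow G hr hinit, ENNReal.tsum_geometric]

end General

lemma unifNot_apply (z u : Fin 3) : unifNot z u = if u = z then 0 else 2⁻¹ := by
  have hcard : ({z}ᶜ : Finset (Fin 3)).card = 2 := by simp [Finset.card_compl]
  by_cases h : u = z <;> simp [unifNot, PMF.uniformOfFinset_apply, hcard, h]

lemma mem_nbhd_K3 (a b : Fin 3) : b ∈ nbhd K3 a := by
  rw [nbhd, Finset.mem_insert, SimpleGraph.mem_neighborFinset, K3, SimpleGraph.top_adj, ne_comm]
  exact eq_or_ne b a

lemma step1_K3_captured_iff {x y : Fin 3} (hxy : x ≠ y) (u w : Fin 3) :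
    (step1 K3 (x, y) u w).1 = (step1 K3 (x, y) u w).2 ↔ u = w ∨ (u = y ∧ w = x) := by
  by_cases hswap : u = y ∧ w = x <;> simp [step1, hxy, mem_nbhd_K3, hswap]

lemma escapeProb_K3 {x y : Fin 3} (hxy : x ≠ y) (μ ν : PMF (Fin 3)) :
    escapeProb K3 μ ν (x, y) =
      ∑ u, μ u * ∑ w, ν w * if u = w ∨ (u = y ∧ w = x) then 0 else 1 := by
  simp only [escapeProb, tsum_fintype, step1_K3_captured_iff hxy]

lemma sum_unifNot_cop {x y : Fin 3} (hxy : x ≠ y) (w : Fin 3) :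
    ∑ u, unifNot x u * (if u = w ∨ (u = y ∧ w = x) then 0 else 1) = 2⁻¹ := by
  simp only [unifNot_apply, Fin.sum_univ_three]
  fin_cases x <;> fin_cases y <;> fin_cases w <;> simp_all

lemma sum_unifNot_robber {x y : Fin 3} (hxy : x ≠ y) (u : Fin 3) :
    ∑ w, unifNot y w * (if u = w ∨ (u = y ∧ w = x) then 0 else 1) = 2⁻¹ := by
  simp only [unifNot_apply, Fin.sum_univ_three]
  fin_cases x <;> fin_cases y <;> fin_cases u <;> simp_all

lemma escapeProb_unifNot_cop {x y : Fin 3} (hxy : x ≠ y) (ν : PMF (Fin 3)) :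
    escapeProb K3 (unifNot x) ν (x, y) = 2⁻¹ := by
  simp only [escapeProb_K3 hxy, Finset.mul_sum, mul_left_comm (unifNot x _)]
  rw [Finset.sum_comm]
  simp only [← Finset.mul_sum, sum_unifNot_cop hxy]
  rw [← Finset.sum_mul, PMF.sum_coe, one_mul]

lemma escapeProb_unifNot_robber {x y : Fin 3} (hxy : x ≠ y) (μ : PMF (Fin 3)) :
    escapeProb K3 μ (unifNot y) (x, y) = 2⁻¹ := by
  simp only [escapeProb_K3 hxy, sum_unifNot_robber hxy]
  rw [← Finset.sum_mul, PMF.sum_coe, one_mul]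

lemma payoff_piStarC (πR : Strat (Fin 3)) {p : Fin 3 × Fin 3} (hp : p.1 ≠ p.2) :
    payoff K3 piStarC πR p = 2 := by
  rw [payoff_eq_of_constantEscapeProb K3 (r := 2⁻¹) (fun h q hq hfree => ?_) hp,
    ENNReal.one_sub_inv_two, inv_inv]
  simpa [piStarC, hq, hfree] using escapeProb_unifNot_cop hfree (πR h)

lemma payoff_piStarR (πC : Strat (Fin 3)) {p : Fin 3 × Fin 3} (hp : p.1 ≠ p.2) :
    payoff K3 πC piStarR p = 2 := by
  rw [payoff_eq_of_constantEscapeProb K3 (r := 2⁻¹) (fun h q hq hfree => ?_) hp,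
    ENNReal.one_sub_inv_two, inv_inv]
  simpa [piStarR, hq, hfree] using escapeProb_unifNot_robber hfree (πC h)

/-- on `K₃`, (a) if both players use `π*`, the expected capture time
from every initial position `(x, y)` with `x ≠ y` equals `2`; and (b) these strategies
are optimal, i.e. the value of the game is `2` from every position `(x, y)` with
`x ≠ y` (and `0` on the diagonal). -/
theorem k3_value_two :
    (∀ p : Fin 3 × Fin 3, p.1 ≠ p.2 → payoff K3 piStarC piStarR p = 2) ∧
    (∀ p : Fin 3 × Fin 3, p.1 ≠ p.2 →
        (⨆ πR : Strat (Fin 3), payoff K3 piStarC πR p) = gameValue K3 p ∧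
        (⨅ πC : Strat (Fin 3), payoff K3 πC piStarR p) = gameValue K3 p ∧
        gameValue K3 p = 2) ∧
    (∀ x : Fin 3, gameValue K3 (x, x) = 0) := by
  refine ⟨fun p hp => payoff_piStarC piStarR hp, fun p hp => ?_, fun x => ?_⟩
  · have hvalue : gameValue K3 p = 2 := iInf_iSup_eq_of_saddle
      (fun πR => (payoff_piStarC πR hp).le) (fun πC => (payoff_piStarR πC hp).ge)
    simp only [hvalue, payoff_piStarC _ hp, payoff_piStarR _ hp, iSup_const, iInf_const, and_self]
  · simp [gameValue, payoff_diag]
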